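/- arXiv:2310.14838 — 2 statements merged into one kernel-verified Lean document; each statement's English description precedes it below -/
import Mathlib

section
/- Expected risk for the global linear regressor (GLR): if θ̂ minimizes Σᵢ ‖Yᵢ − Xᵢθ‖² over θ, then the excess expected risk of using θ̂ in every context equals Σᵢ ‖θ̄ − θᵢ‖²_{ψᵢ} + σ²d, where θ̄ = (Σᵢψᵢ)⁻¹(Σᵢψᵢθᵢ), ψᵢ = XᵢᵀXᵢ, and d is the parameter dimension. -/
open MeasureTheory Matrix ProbabilityTheory
open scoped BigOperators

section AuxiliaryLemmas

open MeasureTheory Set Matrix ProbabilityTheory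
open scoped ENNReal

variable {Ω : Type*} [MeasurableSpace Ω] {μ : Measure Ω}

/-- If `s ⊆ e` with `e` null-measurable of finite measure and the outer measures of `s`
and `e \ s` add up to that of `e`, then `s` is null measurable. -/
lemma nullMeasurableSet_of_add_compl {s e : Set Ω} (he : NullMeasurableSet e μ)
    (hfin : μ e ≠ ⊤) (hsub : s ⊆ e) (hadd : μ s + μ (e \ s) = μ e) :
    NullMeasurableSet s μ := by
  set u := toMeasurable μ (e \ s) with hu
  have hum : MeasurableSet u := measurableSet_toMeasurable μ (e \ s)
  have hesu : e \ s ⊆ u := subset_toMeasurable μ (e \ s)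
  have hμu : μ u = μ (e \ s) := measure_toMeasurable _
  set t := toMeasurable μ s with ht
  have htm : MeasurableSet t := measurableSet_toMeasurable μ s
  have hst : s ⊆ t := subset_toMeasurable μ s
  have hμt : μ t = μ s := measure_toMeasurable _
  set m := e \ u with hm
  have hms : m ⊆ s := by
    intro ω hω
    by_contra hs'
    exact hω.2 (hesu ⟨hω.1, hs'⟩)
  have hfin' : μ (e \ s) ≠ ⊤ := fun h => hfin (by simpa [h] using hadd.symm)
  have hfins : μ s ≠ ⊤ := fun h => hfin (by simpa [h] using hadd.symm)
  -- μ m = μ s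
  have h2 : μ (e ∩ u) + μ m = μ e := measure_inter_add_diff e hum
  have h3 : μ (e ∩ u) ≤ μ (e \ s) := le_trans (measure_mono inter_subset_right) hμu.le
  have h4 : μ m ≤ μ s := measure_mono hms
  have hμm : μ m = μ s := by
    refine le_antisymm h4 ?_
    have h5 : μ s + μ (e \ s) ≤ μ m + μ (e \ s) := by
      calc μ s + μ (e \ s) = μ e := hadd
      _ = μ (e ∩ u) + μ m := h2.symm
      _ ≤ μ (e \ s) + μ m := add_le_add_left h3 _
      _ = μ m + μ (e \ s) := add_comm _ _
    exact (ENNReal.add_le_add_iff_right hfin').mp h5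
  -- μ ((e ∩ t) ∩ u) = 0
  have hmet : m ⊆ e ∩ t := fun ω hω => ⟨hω.1, hst (hms hω)⟩
  have h6 : μ ((e ∩ t) ∩ u) + μ ((e ∩ t) \ u) = μ (e ∩ t) := measure_inter_add_diff _ hum
  have h7 : (e ∩ t) \ u = m := by
    apply Subset.antisymm
    · intro ω hω; exact ⟨hω.1.1, hω.2⟩
    · intro ω hω; exact ⟨hmet hω, hω.2⟩
  have h8 : μ (e ∩ t) ≤ μ m := by
    rw [hμm]; exact le_trans (measure_mono inter_subset_right) hμt.le
  have h9 : μ ((e ∩ t) ∩ u) = 0 := by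
    rw [h7] at h6
    have : μ ((e ∩ t) ∩ u) + μ m ≤ 0 + μ m := by
      rw [h6, zero_add]; exact h8
    simpa using (ENNReal.add_le_add_iff_right (by rw [hμm]; exact hfins)).mp this
  -- s \ m is null
  have hsmul : s \ m ⊆ (e ∩ t) ∩ u := by
    intro ω hω
    refine ⟨⟨hsub hω.1, hst hω.1⟩, ?_⟩
    by_contra hωu
    exact hω.2 ⟨hsub hω.1, hωu⟩
  have hnull : μ (s \ m) = 0 := measure_mono_null hsmul h9
  have : (m ∪ s \ m : Set Ω) = s := Set.union_diff_cancel hms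
  rw [← this]
  exact (he.diff hum.nullMeasurableSet).union (NullMeasurableSet.of_null hnull)

/-- A function that is independent of a non-a.e.-zero function `g` and such that the products
`f*f`, `g*g`, `f*g` are a.e. measurable is itself a.e. measurable. -/
lemma aemeasurable_of_indepFun [IsProbabilityMeasure μ] {f g : Ω → ℝ}
    (hind : IndepFun f g μ)
    (hff : AEMeasurable (fun ω => f ω * f ω) μ)
    (hgg : AEMeasurable (fun ω => g ω * g ω) μ)
    (hfg : AEMeasurable (fun ω => f ω * g ω) μ)
    (hgne : ¬ (g =ᵐ[μ] fun _ => (0:ℝ))) : AEMeasurable f μ := by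
  by_cases hfz : f =ᵐ[μ] fun _ => (0:ℝ)
  · exact aemeasurable_const.congr hfz.symm
  have hIE := hind.measure_inter_preimage_eq_mul (μ := μ)
  -- notation
  set G : Set Ω := g ⁻¹' ({0}ᶜ) with hG
  set D : Set Ω := g ⁻¹' ({0} : Set ℝ) with hD
  have hDG : D = Gᶜ := by
    rw [hG, hD, ← Set.preimage_compl, compl_compl]
  have hGnm : NullMeasurableSet G μ := by
    have : G = (fun ω => g ω * g ω) ⁻¹' ({0}ᶜ) := by
      ext ω; simp [hG, mul_self_eq_zero]
    rw [this]
    exact hgg.nullMeasurable (measurableSet_singleton 0).compl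
  have hDnm : NullMeasurableSet D μ := by rw [hDG]; exact hGnm.compl
  -- the sets where f*g is positive/negative
  set Hp : Set Ω := (fun ω => f ω * g ω) ⁻¹' (Ioi 0) with hHp
  set Hm : Set Ω := (fun ω => f ω * g ω) ⁻¹' (Iio 0) with hHm
  have hHpnm : NullMeasurableSet Hp μ := hfg.nullMeasurable measurableSet_Ioi
  have hHmnm : NullMeasurableSet Hm μ := hfg.nullMeasurable measurableSet_Iio
  have hGne : μ G ≠ 0 := by
    intro h0
    apply hgne
    rw [Filter.eventuallyEq_iff_exists_mem]
    refine ⟨Gᶜ, ?_, fun ω hω => by simpa [hG] using hω⟩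
    rw [MeasureTheory.mem_ae_iff, compl_compl]
    exact h0
  -- at least one of μ {f > 0}, μ {f < 0} is nonzero
  have hPor : μ (f ⁻¹' (Ioi 0)) ≠ 0 ∨ μ (f ⁻¹' (Iio 0)) ≠ 0 := by
    by_contra h
    push_neg at h
    apply hfz
    rw [Filter.eventuallyEq_iff_exists_mem]
    refine ⟨(f ⁻¹' (Ioi 0) ∪ f ⁻¹' (Iio 0))ᶜ, ?_, fun ω hω => ?_⟩
    · rw [MeasureTheory.mem_ae_iff, compl_compl]
      exact le_antisymm (le_trans (measure_union_le _ _) (by rw [h.1, h.2, add_zero])) zero_le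
    · simp only [Set.mem_compl_iff, Set.mem_union, Set.mem_preimage, Set.mem_Ioi,
        Set.mem_Iio, not_or, not_lt] at hω
      exact le_antisymm hω.1 hω.2
  -- key identity : μ {g > 0} + μ {g < 0} = μ G
  have hQG : μ (g ⁻¹' (Ioi 0)) + μ (g ⁻¹' (Iio 0)) = μ G := by
    have main : ∀ (A : Set Ω) (H₁ H₂ : Set Ω),
        (A ∩ G) ∩ H₁ = A ∩ g ⁻¹' (Ioi 0) → (A ∩ G) \ H₁ = A ∩ g ⁻¹' (Iio 0) →
        NullMeasurableSet H₁ μ →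
        μ (A ∩ g ⁻¹' (Ioi 0)) + μ (A ∩ g ⁻¹' (Iio 0)) = μ (A ∩ G) := by
      intro A H₁ H₂ e1 e2 hnm
      rw [← e1, ← e2]
      exact measure_inter_add_diff₀ _ hnm
    have hmulG : ∀ (S : Set ℝ), MeasurableSet S → μ (f ⁻¹' S ∩ G) = μ (f ⁻¹' S) * μ G :=
      fun S hS => hIE S ({0}ᶜ) hS (measurableSet_singleton 0).compl
    rcases hPor with hP | hP
    · have e1 : ((f ⁻¹' (Ioi 0)) ∩ G) ∩ Hp = (f ⁻¹' (Ioi 0)) ∩ g ⁻¹' (Ioi 0) := by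
        ext ω
        simp only [hG, hHp, Set.mem_inter_iff, Set.mem_preimage, Set.mem_Ioi, Set.mem_compl_iff,
          Set.mem_singleton_iff]
        constructor
        · rintro ⟨⟨hf, hg⟩, hfg'⟩
          exact ⟨hf, by nlinarith [hfg']⟩
        · rintro ⟨hf, hg⟩
          exact ⟨⟨hf, by positivity⟩, by positivity⟩
      have e2 : ((f ⁻¹' (Ioi 0)) ∩ G) \ Hp = (f ⁻¹' (Ioi 0)) ∩ g ⁻¹' (Iio 0) := by
        ext ω
        simp only [hG, hHp, Set.mem_diff, Set.mem_inter_iff, Set.mem_preimage, Set.mem_Ioi,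
          Set.mem_Iio, Set.mem_compl_iff, Set.mem_singleton_iff, not_lt]
        constructor
        · rintro ⟨⟨hf, hg⟩, hfg'⟩
          refine ⟨hf, lt_of_le_of_ne ?_ hg⟩
          nlinarith [hfg']
        · rintro ⟨hf, hg⟩
          exact ⟨⟨hf, ne_of_lt hg⟩, by nlinarith⟩
      have key := main _ _ Hm e1 e2 hHpnm
      rw [hIE (Ioi 0) (Ioi 0) measurableSet_Ioi measurableSet_Ioi,
        hIE (Ioi 0) (Iio 0) measurableSet_Ioi measurableSet_Iio,
        hmulG (Ioi 0) measurableSet_Ioi, ← mul_add] at key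
      exact (ENNReal.mul_right_inj hP (measure_ne_top μ _)).mp key
    · have e1 : ((f ⁻¹' (Iio 0)) ∩ G) ∩ Hm = (f ⁻¹' (Iio 0)) ∩ g ⁻¹' (Ioi 0) := by
        ext ω
        simp only [hG, hHm, Set.mem_inter_iff, Set.mem_preimage, Set.mem_Ioi, Set.mem_Iio,
          Set.mem_compl_iff, Set.mem_singleton_iff]
        constructor
        · rintro ⟨⟨hf, hg⟩, hfg'⟩
          exact ⟨hf, by nlinarith [hfg']⟩
        · rintro ⟨hf, hg⟩
          refine ⟨⟨hf, by positivity⟩, by nlinarith⟩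
      have e2 : ((f ⁻¹' (Iio 0)) ∩ G) \ Hm = (f ⁻¹' (Iio 0)) ∩ g ⁻¹' (Iio 0) := by
        ext ω
        simp only [hG, hHm, Set.mem_diff, Set.mem_inter_iff, Set.mem_preimage, Set.mem_Ioi,
          Set.mem_Iio, Set.mem_compl_iff, Set.mem_singleton_iff, not_lt]
        constructor
        · rintro ⟨⟨hf, hg⟩, hfg'⟩
          refine ⟨hf, lt_of_le_of_ne ?_ hg⟩
          nlinarith [hfg']
        · rintro ⟨hf, hg⟩
          exact ⟨⟨hf, ne_of_lt hg⟩, by nlinarith⟩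
      have key := main _ _ Hp e1 e2 hHmnm
      rw [hIE (Iio 0) (Ioi 0) measurableSet_Iio measurableSet_Ioi,
        hIE (Iio 0) (Iio 0) measurableSet_Iio measurableSet_Iio,
        hmulG (Iio 0) measurableSet_Iio, ← mul_add] at key
      exact (ENNReal.mul_right_inj hP (measure_ne_top μ _)).mp key
  -- null measurability of the positivity sets of g
  have hBpG : g ⁻¹' (Ioi 0) ⊆ G := fun ω hω => by
    simp only [hG, Set.mem_preimage, Set.mem_compl_iff, Set.mem_singleton_iff]
    exact ne_of_gt hω
  have hGBp : G \ g ⁻¹' (Ioi 0) = g ⁻¹' (Iio 0) := by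
    ext ω
    simp only [hG, Set.mem_diff, Set.mem_preimage, Set.mem_compl_iff, Set.mem_singleton_iff,
      Set.mem_Ioi, Set.mem_Iio, not_lt]
    constructor
    · rintro ⟨hg, hle⟩; exact lt_of_le_of_ne hle hg
    · intro h; exact ⟨ne_of_lt h, le_of_lt h⟩
  have hBpnm : NullMeasurableSet (g ⁻¹' (Ioi 0)) μ := by
    refine nullMeasurableSet_of_add_compl hGnm (measure_ne_top μ _) hBpG ?_
    rw [hGBp]; exact hQG
  have hBmnm : NullMeasurableSet (g ⁻¹' (Iio 0)) μ := by
    rw [← hGBp]; exact hGnm.diff hBpnm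
  -- a.e. measurability of sqrt(g*g)
  have hsq : AEMeasurable (fun ω => Real.sqrt (g ω * g ω)) μ :=
    (Real.continuous_sqrt.measurable.comp_aemeasurable hgg)
  -- for each t, f ⁻¹' (Iio t) ∩ G is null measurable
  have hfG : ∀ t : ℝ, NullMeasurableSet (f ⁻¹' (Iio t) ∩ G) μ := by
    intro t
    have hW1 : NullMeasurableSet ((fun ω => f ω * g ω - t * Real.sqrt (g ω * g ω)) ⁻¹' (Iio 0)) μ :=
      (hfg.sub (hsq.const_mul t)).nullMeasurable measurableSet_Iio
    have hW2 : NullMeasurableSet ((fun ω => f ω * g ω + t * Real.sqrt (g ω * g ω)) ⁻¹' (Ioi 0)) μ :=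
      (hfg.add (hsq.const_mul t)).nullMeasurable measurableSet_Ioi
    have hdecomp : f ⁻¹' (Iio t) ∩ G =
        ((fun ω => f ω * g ω - t * Real.sqrt (g ω * g ω)) ⁻¹' (Iio 0) ∩ g ⁻¹' (Ioi 0)) ∪
        ((fun ω => f ω * g ω + t * Real.sqrt (g ω * g ω)) ⁻¹' (Ioi 0) ∩ g ⁻¹' (Iio 0)) := by
      ext ω
      simp only [hG, Set.mem_inter_iff, Set.mem_union, Set.mem_preimage, Set.mem_Iio, Set.mem_Ioi,
        Set.mem_compl_iff, Set.mem_singleton_iff, sub_neg, neg_lt]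
      constructor
      · rintro ⟨hf, hg⟩
        rcases lt_or_gt_of_ne hg with hgneg | hgpos
        · refine Or.inr ⟨?_, hgneg⟩
          have : Real.sqrt (g ω * g ω) = -g ω := by
            rw [show g ω * g ω = (-g ω) * (-g ω) by ring]
            exact Real.sqrt_mul_self (by linarith)
          rw [this]
          nlinarith
        · refine Or.inl ⟨?_, hgpos⟩
          have : Real.sqrt (g ω * g ω) = g ω := Real.sqrt_mul_self (le_of_lt hgpos)
          rw [this]
          nlinarith
      · rintro (⟨hlt, hgpos⟩ | ⟨hlt, hgneg⟩)
        · have hs : Real.sqrt (g ω * g ω) = g ω := Real.sqrt_mul_self (le_of_lt hgpos)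
          rw [hs] at hlt
          refine ⟨?_, ne_of_gt hgpos⟩
          nlinarith
        · have hs : Real.sqrt (g ω * g ω) = -g ω := by
            rw [show g ω * g ω = (-g ω) * (-g ω) by ring]
            exact Real.sqrt_mul_self (by linarith)
          rw [hs] at hlt
          refine ⟨?_, ne_of_lt hgneg⟩
          nlinarith
    rw [hdecomp]
    exact (hW1.inter hBpnm).union (hW2.inter hBmnm)
  -- for each t, f ⁻¹' (Iio t) ∩ D is null measurable
  have hfD : ∀ t : ℝ, NullMeasurableSet (f ⁻¹' (Iio t) ∩ D) μ := by
    intro t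
    by_cases hβ0 : μ D = 0
    · exact NullMeasurableSet.of_null (measure_mono_null inter_subset_right hβ0)
    have hrel : ∀ S : Set ℝ, MeasurableSet S → μ (f ⁻¹' S ∩ D) = μ (f ⁻¹' S) * μ D :=
      fun S hS => hIE S {0} hS (measurableSet_singleton 0)
    have hsplit : ∀ S : Set ℝ, μ (f ⁻¹' S) = μ (f ⁻¹' S ∩ G) + μ (f ⁻¹' S ∩ D) := by
      intro S
      have h := measure_inter_add_diff₀ (f ⁻¹' S) hGnm
      rw [show f ⁻¹' S \ G = f ⁻¹' S ∩ D by rw [hDG, Set.diff_eq]] at h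
      exact h.symm
    have hIciG : f ⁻¹' (Ici t) ∩ G = G \ (f ⁻¹' (Iio t) ∩ G) := by
      ext ω
      constructor
      · rintro ⟨hf, hg⟩
        refine ⟨hg, fun hmem => absurd (Set.mem_Iio.mp (Set.mem_preimage.mp hmem.1)) ?_⟩
        exact not_lt.mpr (Set.mem_Ici.mp (Set.mem_preimage.mp hf))
      · rintro ⟨hg, hmem⟩
        refine ⟨Set.mem_preimage.mpr (Set.mem_Ici.mpr (not_lt.mp (fun hlt => ?_))), hg⟩
        exact hmem ⟨Set.mem_preimage.mpr (Set.mem_Iio.mpr hlt), hg⟩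
    have hb : μ (f ⁻¹' (Iio t) ∩ G) + μ (f ⁻¹' (Ici t) ∩ G) = μ G := by
      rw [hIciG]
      have h := measure_inter_add_diff₀ G (hfG t)
      rwa [Set.inter_eq_self_of_subset_right Set.inter_subset_right] at h
    have hGD : μ G + μ D = 1 := by
      have h := measure_add_measure_compl₀ hGnm
      rwa [← hDG, measure_univ] at h
    have hβ1 : μ D ≠ 1 := by
      intro h1
      apply hGne
      have := hGD
      rw [h1] at this
      nth_rewrite 2 [← zero_add (1:ℝ≥0∞)] at this
      exact WithTop.add_right_cancel ENNReal.one_ne_top this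
    have hx : μ (f ⁻¹' (Iio t) ∩ D) = (μ (f ⁻¹' (Iio t) ∩ G) + μ (f ⁻¹' (Iio t) ∩ D)) * μ D := by
      rw [← hsplit]
      exact hrel _ measurableSet_Iio
    have hy : μ (f ⁻¹' (Ici t) ∩ D) = (μ (f ⁻¹' (Ici t) ∩ G) + μ (f ⁻¹' (Ici t) ∩ D)) * μ D := by
      rw [← hsplit]
      exact hrel _ measurableSet_Ici
    -- pass to real numbers
    have hxr := congrArg ENNReal.toReal hx
    have hyr := congrArg ENNReal.toReal hy
    have hbr := congrArg ENNReal.toReal hb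
    have hGDr := congrArg ENNReal.toReal hGD
    rw [ENNReal.toReal_mul, ENNReal.toReal_add (measure_ne_top μ _) (measure_ne_top μ _)] at hxr hyr
    rw [ENNReal.toReal_add (measure_ne_top μ _) (measure_ne_top μ _)] at hbr hGDr
    rw [ENNReal.toReal_one] at hGDr
    have hβr1 : (μ D).toReal ≠ 1 := by
      intro h
      apply hβ1
      have := ENNReal.ofReal_toReal (measure_ne_top μ D)
      rw [h] at this
      simpa using this.symm
    have hgoalr : (μ (f ⁻¹' (Iio t) ∩ D)).toReal + (μ (f ⁻¹' (Ici t) ∩ D)).toReal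
        = (μ D).toReal := by
      have hfactor : ((μ (f ⁻¹' (Iio t) ∩ D)).toReal + (μ (f ⁻¹' (Ici t) ∩ D)).toReal
          - (μ D).toReal) * (1 - (μ D).toReal) = 0 := by
        linear_combination hxr + hyr + (μ D).toReal * hbr + (μ D).toReal * hGDr
      rcases mul_eq_zero.mp hfactor with h | h
      · linarith
      · exact absurd (by linarith : (μ D).toReal = 1) hβr1
    have hgoal : μ (f ⁻¹' (Iio t) ∩ D) + μ (f ⁻¹' (Ici t) ∩ D) = μ D := by
      have h1 : μ (f ⁻¹' (Iio t) ∩ D) + μ (f ⁻¹' (Ici t) ∩ D) ≠ ⊤ :=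
        ENNReal.add_ne_top.mpr ⟨measure_ne_top μ _, measure_ne_top μ _⟩
      rw [← ENNReal.toReal_eq_toReal_iff' h1 (measure_ne_top μ _),
        ENNReal.toReal_add (measure_ne_top μ _) (measure_ne_top μ _)]
      exact hgoalr
    have hdiff : D \ (f ⁻¹' (Iio t) ∩ D) = f ⁻¹' (Ici t) ∩ D := by
      ext ω
      constructor
      · rintro ⟨hd, hmem⟩
        refine ⟨Set.mem_preimage.mpr (Set.mem_Ici.mpr (not_lt.mp (fun hlt => ?_))), hd⟩
        exact hmem ⟨Set.mem_preimage.mpr (Set.mem_Iio.mpr hlt), hd⟩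
      · rintro ⟨hf, hd⟩
        refine ⟨hd, fun hmem => absurd (Set.mem_Iio.mp (Set.mem_preimage.mp hmem.1)) ?_⟩
        exact not_lt.mpr (Set.mem_Ici.mp (Set.mem_preimage.mp hf))
    refine nullMeasurableSet_of_add_compl hDnm (measure_ne_top μ _) Set.inter_subset_right ?_
    rw [hdiff]
    exact hgoal
  -- conclude
  have hNM : NullMeasurable f μ := by
    have H : ∀ t : ℝ, NullMeasurableSet (f ⁻¹' (Iio t)) μ := by
      intro t
      have : f ⁻¹' (Iio t) = (f ⁻¹' (Iio t) ∩ G) ∪ (f ⁻¹' (Iio t) ∩ D) := by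
        rw [hDG, ← Set.inter_union_distrib_left, Set.union_compl_self, Set.inter_univ]
      rw [this]
      exact (hfG t).union (hfD t)
    exact measurable_of_Iio (α := ℝ) (δ := NullMeasurableSpace Ω μ) H
  exact hNM.aemeasurable

lemma integrable_of_indepFun [IsProbabilityMeasure μ] {f g : Ω → ℝ}
    (hind : IndepFun f g μ)
    (hff : Integrable (fun ω => f ω * f ω) μ)
    (hgg : Integrable (fun ω => g ω * g ω) μ)
    (hfg : Integrable (fun ω => f ω * g ω) μ)
    (hgne : ¬ (g =ᵐ[μ] fun _ => (0:ℝ))) : Integrable f μ := by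
  have ham : AEMeasurable f μ :=
    aemeasurable_of_indepFun hind hff.aemeasurable hgg.aemeasurable hfg.aemeasurable hgne
  have h2 : MemLp f 2 μ := by
    rw [memLp_two_iff_integrable_sq ham.aestronglyMeasurable]
    have : (fun x => f x ^ 2) = fun ω => f ω * f ω := by funext ω; ring
    rw [this]
    exact hff
  exact h2.integrable one_le_two

lemma ae_zero_of_integral_sq_zero {f : Ω → ℝ}
    (hff : Integrable (fun ω => f ω * f ω) μ)
    (h0 : ∫ ω, f ω * f ω ∂μ = 0) : f =ᵐ[μ] fun _ => (0:ℝ) := by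
  have hnn : 0 ≤ᵐ[μ] fun ω => f ω * f ω := ae_of_all _ fun ω => mul_self_nonneg _
  have := (integral_eq_zero_iff_of_nonneg_ae hnn hff).mp h0
  filter_upwards [this] with ω hω
  exact mul_self_eq_zero.mp hω

lemma core_expand [IsProbabilityMeasure μ] (A T : Ω → ℝ) (b : ℝ)
    (hA : Integrable A μ) (hT : Integrable T μ)
    (hAA : Integrable (fun ω => A ω * A ω) μ) (hTT : Integrable (fun ω => T ω * T ω) μ)
    (hAT : Integrable (fun ω => A ω * T ω) μ)
    (hAm : ∫ ω, A ω ∂μ = 0) (hTm : ∫ ω, T ω ∂μ = 0) (hATm : ∫ ω, A ω * T ω ∂μ = 0) :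
    Integrable (fun ω => (A ω - (b + T ω)) * (A ω - (b + T ω))) μ ∧
    ∫ ω, (A ω - (b + T ω)) * (A ω - (b + T ω)) ∂μ
      = (∫ ω, A ω * A ω ∂μ) + (b ^ 2 + ∫ ω, T ω * T ω ∂μ) := by
  have hid : ∀ ω, (A ω - (b + T ω)) * (A ω - (b + T ω))
      = (A ω * A ω + T ω * T ω + b ^ 2) +
        ((-2) * (A ω * T ω) + ((-2 * b) * A ω + (2 * b) * T ω)) := by
    intro ω; ring
  have i1 : Integrable (fun ω => A ω * A ω + T ω * T ω) μ := hAA.add hTT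
  have i2 : Integrable (fun ω => A ω * A ω + T ω * T ω + b ^ 2) μ := i1.add (integrable_const _)
  have i3 : Integrable (fun ω => (-2) * (A ω * T ω)) μ := hAT.const_mul _
  have i4 : Integrable (fun ω => (-2 * b) * A ω) μ := hA.const_mul _
  have i5 : Integrable (fun ω => (2 * b) * T ω) μ := hT.const_mul _
  have i45 : Integrable (fun ω => (-2 * b) * A ω + (2 * b) * T ω) μ := i4.add i5
  have i345 : Integrable (fun ω => (-2) * (A ω * T ω) + ((-2 * b) * A ω + (2 * b) * T ω)) μ :=
    i3.add i45
  have hint : Integrable (fun ω => (A ω - (b + T ω)) * (A ω - (b + T ω))) μ := by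
    refine (i2.add i345).congr (ae_of_all _ fun ω => ?_)
    simp only [Pi.add_apply]
    rw [← hid ω]
  refine ⟨hint, ?_⟩
  calc ∫ ω, (A ω - (b + T ω)) * (A ω - (b + T ω)) ∂μ
      = ∫ ω, (A ω * A ω + T ω * T ω + b ^ 2) +
        ((-2) * (A ω * T ω) + ((-2 * b) * A ω + (2 * b) * T ω)) ∂μ := by
        exact integral_congr_ae (ae_of_all _ hid)
    _ = (∫ ω, A ω * A ω + T ω * T ω + b ^ 2 ∂μ) +
        ∫ ω, (-2) * (A ω * T ω) + ((-2 * b) * A ω + (2 * b) * T ω) ∂μ :=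
        integral_add i2 i345
    _ = ((∫ ω, A ω * A ω + T ω * T ω ∂μ) + ∫ _ω, (b:ℝ) ^ 2 ∂μ) +
        ((∫ ω, (-2) * (A ω * T ω) ∂μ) + ((∫ ω, (-2 * b) * A ω ∂μ) + ∫ ω, (2 * b) * T ω ∂μ)) := by
        rw [integral_add i1 (integrable_const _), integral_add i3 i45, integral_add i4 i5]
    _ = (∫ ω, A ω * A ω ∂μ) + (b ^ 2 + ∫ ω, T ω * T ω ∂μ) := by
        rw [integral_add hAA hTT, integral_const_mul, integral_const_mul, integral_const_mul,
          integral_const, hAm, hTm, hATm]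
        simp [measure_univ]
        ring

end AuxiliaryLemmas

/-- Expected risk for the global linear regressor (GLR): the excess expected
risk of using the pooled OLS estimator `θ̂` in every context equals
`∑ i ‖θ̄ − θ i‖²_{ψ i} + σ² d`. -/
theorem expected_risk_GLR
    {Ω : Type*} [MeasurableSpace Ω] (μ : Measure Ω) [IsProbabilityMeasure μ]
    {K d : ℕ} {n : Fin K → ℕ} (σ : ℝ)
    (X : (i : Fin K) → Matrix (Fin (n i)) (Fin d) ℝ)
    (θ : Fin K → Fin d → ℝ)
    -- training noise and independent fresh test noise
    (ε ε' : (i : Fin K) → Ω → Fin (n i) → ℝ)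
    (hεmean : ∀ i j, ∫ ω, ε i ω j ∂μ = 0)
    (hε'mean : ∀ i j, ∫ ω, ε' i ω j ∂μ = 0)
    (hεcov : ∀ i j k, ∫ ω, ε i ω j * ε i ω k ∂μ = if j = k then σ ^ 2 else 0)
    (hε'cov : ∀ i j k, ∫ ω, ε' i ω j * ε' i ω k ∂μ = if j = k then σ ^ 2 else 0)
    (hεindep : ∀ i i', i ≠ i' → IndepFun (ε i) (ε i') μ)
    (hε'indep : ∀ i i', i ≠ i' → IndepFun (ε' i) (ε' i') μ)
    (hfresh : ∀ i i', IndepFun (ε i) (ε' i') μ)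
    -- integrability assumptions
    (hεint2 : ∀ i i' j k, Integrable (fun ω => ε i ω j * ε i' ω k) μ)
    (hε'int2 : ∀ i i' j k, Integrable (fun ω => ε' i ω j * ε' i' ω k) μ)
    (hmixint : ∀ i i' j k, Integrable (fun ω => ε i ω j * ε' i' ω k) μ)
    -- training data and pooled OLS estimator
    (Y Y' : (i : Fin K) → Ω → Fin (n i) → ℝ)
    (hY : ∀ i ω, Y i ω = X i *ᵥ θ i + ε i ω)
    (hY' : ∀ i ω, Y' i ω = X i *ᵥ θ i + ε' i ω)
    (ψ : Fin K → Matrix (Fin d) (Fin d) ℝ)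
    (hψ : ∀ i, ψ i = (X i)ᵀ * X i)
    (hS : IsUnit (∑ i, ψ i).det)
    (θhat : Ω → Fin d → ℝ)
    (hθhat : ∀ ω, θhat ω = (∑ i, ψ i)⁻¹ *ᵥ ∑ i, (X i)ᵀ *ᵥ Y i ω)
    (θbar : Fin d → ℝ)
    (hθbar : θbar = (∑ i, ψ i)⁻¹ *ᵥ ∑ i, ψ i *ᵥ θ i) :
    (∑ i, ∫ ω, (Y' i ω - X i *ᵥ θhat ω) ⬝ᵥ (Y' i ω - X i *ᵥ θhat ω) ∂μ)
        - (∑ i, ∫ ω, ε' i ω ⬝ᵥ ε' i ω ∂μ)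
      = (∑ i, (θbar - θ i) ⬝ᵥ ψ i *ᵥ (θbar - θ i)) + σ ^ 2 * d := by
  -- step 1: integrability of all the noise coordinates
  have hIntε : ∀ i j, Integrable (fun ω => ε i ω j) μ := by
    intro i j
    by_cases hσ : σ = 0
    · have h0 : ∫ ω, ε i ω j * ε i ω j ∂μ = 0 := by
        rw [hεcov i j j, if_pos rfl, hσ]; ring
      exact (integrable_const (0:ℝ)).congr
        (ae_zero_of_integral_sq_zero (hεint2 i i j j) h0).symm
    · have hind : IndepFun (fun ω => ε i ω j) (fun ω => ε' i ω j) μ :=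
        (hfresh i i).comp (measurable_pi_apply j) (measurable_pi_apply j)
      have hgne : ¬ ((fun ω => ε' i ω j) =ᵐ[μ] fun _ => (0:ℝ)) := by
        intro h
        have h2 : (fun ω => ε' i ω j * ε' i ω j) =ᵐ[μ] fun _ => (0:ℝ) := by
          filter_upwards [h] with ω hω; rw [hω]; ring
        have h3 : ∫ ω, ε' i ω j * ε' i ω j ∂μ = 0 := by
          rw [integral_congr_ae h2, integral_const]; simp
        rw [hε'cov i j j, if_pos rfl] at h3
        exact pow_ne_zero 2 hσ h3
      exact integrable_of_indepFun hind (hεint2 i i j j) (hε'int2 i i j j)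
        (hmixint i i j j) hgne
  have hIntε' : ∀ i j, Integrable (fun ω => ε' i ω j) μ := by
    intro i j
    by_cases hσ : σ = 0
    · have h0 : ∫ ω, ε' i ω j * ε' i ω j ∂μ = 0 := by
        rw [hε'cov i j j, if_pos rfl, hσ]; ring
      exact (integrable_const (0:ℝ)).congr
        (ae_zero_of_integral_sq_zero (hε'int2 i i j j) h0).symm
    · have hind : IndepFun (fun ω => ε' i ω j) (fun ω => ε i ω j) μ :=
        ((hfresh i i).comp (measurable_pi_apply j) (measurable_pi_apply j)).symm
      have hgne : ¬ ((fun ω => ε i ω j) =ᵐ[μ] fun _ => (0:ℝ)) := by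
        intro h
        have h2 : (fun ω => ε i ω j * ε i ω j) =ᵐ[μ] fun _ => (0:ℝ) := by
          filter_upwards [h] with ω hω; rw [hω]; ring
        have h3 : ∫ ω, ε i ω j * ε i ω j ∂μ = 0 := by
          rw [integral_congr_ae h2, integral_const]; simp
        rw [hεcov i j j, if_pos rfl] at h3
        exact pow_ne_zero 2 hσ h3
      refine integrable_of_indepFun hind (hε'int2 i i j j) (hεint2 i i j j)
        ?_ hgne
      exact (hmixint i i j j).congr (ae_of_all _ fun ω => mul_comm _ _)
  -- step 2: vanishing cross moments
  have hmix0 : ∀ i i' j k, ∫ ω, ε' i ω j * ε i' ω k ∂μ = 0 := by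
    intro i i' j k
    have hind : IndepFun (fun ω => ε' i ω j) (fun ω => ε i' ω k) μ :=
      ((hfresh i' i).comp (measurable_pi_apply k) (measurable_pi_apply j)).symm
    have := IndepFun.integral_fun_mul_eq_mul_integral hind (hIntε' i j).aestronglyMeasurable (hIntε i' k).aestronglyMeasurable
    have h2 : ∫ ω, ε' i ω j * ε i' ω k ∂μ
        = (∫ ω, ε' i ω j ∂μ) * ∫ ω, ε i' ω k ∂μ := this
    rw [h2, hε'mean i j, zero_mul]
  have hcross : ∀ i i' j k, i ≠ i' → ∫ ω, ε i ω j * ε i' ω k ∂μ = 0 := by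
    intro i i' j k hne
    have hind : IndepFun (fun ω => ε i ω j) (fun ω => ε i' ω k) μ :=
      (hεindep i i' hne).comp (measurable_pi_apply j) (measurable_pi_apply k)
    have h2 : ∫ ω, ε i ω j * ε i' ω k ∂μ
        = (∫ ω, ε i ω j ∂μ) * ∫ ω, ε i' ω k ∂μ :=
      IndepFun.integral_fun_mul_eq_mul_integral hind (hIntε i j).aestronglyMeasurable (hIntε i' k).aestronglyMeasurable
    rw [h2, hεmean i j, zero_mul]
  -- step 3: matrix abbreviations and residual formula
  set S : Matrix (Fin d) (Fin d) ℝ := ∑ i, ψ i with hSdef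
  have hSsymm : Sᵀ = S := by
    rw [hSdef, Matrix.transpose_sum]
    refine Finset.sum_congr rfl fun i _ => ?_
    rw [hψ i, Matrix.transpose_mul, Matrix.transpose_transpose]
  have hSinv : S⁻¹ * S = 1 := Matrix.nonsing_inv_mul S hS
  have hSinv' : S * S⁻¹ = 1 := Matrix.mul_nonsing_inv S hS
  have hSinvT : S⁻¹ᵀ = S⁻¹ := by rw [Matrix.transpose_nonsing_inv, hSsymm]
  set c : (i : Fin K) → Fin (n i) → ℝ := fun i => X i *ᵥ (θbar - θ i) with hc
  set N : (i i' : Fin K) → Matrix (Fin (n i)) (Fin (n i')) ℝ :=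
    fun i i' => X i * S⁻¹ * (X i')ᵀ with hN
  have hθhat2 : ∀ ω, θhat ω = θbar + S⁻¹ *ᵥ (∑ i', (X i')ᵀ *ᵥ ε i' ω) := by
    intro ω
    rw [hθhat ω, hθbar]
    have h1 : (∑ i', (X i')ᵀ *ᵥ Y i' ω)
        = (∑ i', ψ i' *ᵥ θ i') + ∑ i', (X i')ᵀ *ᵥ ε i' ω := by
      rw [← Finset.sum_add_distrib]
      refine Finset.sum_congr rfl fun i' _ => ?_
      rw [hY i' ω, Matrix.mulVec_add, Matrix.mulVec_mulVec, ← hψ i']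
    rw [h1, Matrix.mulVec_add]
  have hres0 : ∀ i ω, Y' i ω - X i *ᵥ θhat ω
      = ε' i ω - (X i *ᵥ (θbar - θ i) + ∑ i', (N i i') *ᵥ ε i' ω) := by
    intro i ω
    have h1 : X i *ᵥ (S⁻¹ *ᵥ (∑ i', (X i')ᵀ *ᵥ ε i' ω)) = ∑ i', (N i i') *ᵥ ε i' ω := by
      rw [Matrix.mulVec_mulVec]
      rw [show ((X i * S⁻¹) *ᵥ ∑ i', (X i')ᵀ *ᵥ ε i' ω)
          = ∑ i', (X i * S⁻¹) *ᵥ ((X i')ᵀ *ᵥ ε i' ω) from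
        map_sum (Matrix.mulVecLin (X i * S⁻¹)) _ _]
      refine Finset.sum_congr rfl fun i' _ => ?_
      rw [Matrix.mulVec_mulVec, hN]
    rw [hY' i ω, hθhat2 ω, Matrix.mulVec_add, h1, Matrix.mulVec_sub]
    abel
  have hres : ∀ i ω j, (Y' i ω - X i *ᵥ θhat ω) j
      = ε' i ω j - (c i j + ∑ i', ∑ l, N i i' j l * ε i' ω l) := by
    intro i ω j
    rw [hres0 i ω]
    simp only [Pi.sub_apply, Pi.add_apply, Finset.sum_apply, hc]
    simp [Matrix.mulVec, dotProduct]
  -- step 4: per-group expectation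
  have hgroup : ∀ i, ∫ ω, (Y' i ω - X i *ᵥ θhat ω) ⬝ᵥ (Y' i ω - X i *ᵥ θhat ω) ∂μ
      = (∑ _j : Fin (n i), σ ^ 2)
        + ((∑ j, (c i j) ^ 2) + σ ^ 2 * ∑ j, ∑ i', ∑ l, (N i i' j l) ^ 2) := by
    intro i
    have hTint : ∀ j : Fin (n i),
        Integrable (fun ω => ∑ i', ∑ l, N i i' j l * ε i' ω l) μ :=
      fun j => integrable_finset_sum _ fun i' _ =>
        integrable_finset_sum _ fun l _ => (hIntε i' l).const_mul _
    have hTmean : ∀ j : Fin (n i), ∫ ω, (∑ i', ∑ l, N i i' j l * ε i' ω l) ∂μ = 0 := by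
      intro j
      rw [integral_finset_sum _ fun i' _ =>
        integrable_finset_sum _ fun l _ => (hIntε i' l).const_mul _]
      refine Finset.sum_eq_zero fun i' _ => ?_
      rw [integral_finset_sum _ fun l _ => (hIntε i' l).const_mul _]
      refine Finset.sum_eq_zero fun l _ => ?_
      rw [integral_const_mul, hεmean, mul_zero]
    have hATexp : ∀ (j : Fin (n i)) (ω : Ω),
        ε' i ω j * (∑ i', ∑ l, N i i' j l * ε i' ω l)
        = ∑ i', ∑ l, N i i' j l * (ε' i ω j * ε i' ω l) := by
      intro j ω
      rw [Finset.mul_sum]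
      refine Finset.sum_congr rfl fun i' _ => ?_
      rw [Finset.mul_sum]
      refine Finset.sum_congr rfl fun l _ => ?_
      ring
    have hATint0 : ∀ (j : Fin (n i)) (i' : Fin K) (l : Fin (n i')),
        Integrable (fun ω => N i i' j l * (ε' i ω j * ε i' ω l)) μ :=
      fun j i' l => (((hmixint i' i l j).congr
        (ae_of_all _ fun ω => mul_comm _ _)).const_mul _)
    have hATint : ∀ j : Fin (n i),
        Integrable (fun ω => ε' i ω j * (∑ i', ∑ l, N i i' j l * ε i' ω l)) μ := by
      intro j
      refine (integrable_finset_sum _ fun i' _ =>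
        integrable_finset_sum _ fun l _ => hATint0 j i' l).congr
        (ae_of_all _ fun ω => (hATexp j ω).symm)
    have hATmean : ∀ j : Fin (n i),
        ∫ ω, ε' i ω j * (∑ i', ∑ l, N i i' j l * ε i' ω l) ∂μ = 0 := by
      intro j
      rw [integral_congr_ae (ae_of_all _ (hATexp j))]
      rw [integral_finset_sum _ fun i' _ =>
        integrable_finset_sum _ fun l _ => hATint0 j i' l]
      refine Finset.sum_eq_zero fun i' _ => ?_
      rw [integral_finset_sum _ fun l _ => hATint0 j i' l]
      refine Finset.sum_eq_zero fun l _ => ?_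
      rw [integral_const_mul, hmix0 i i' j l, mul_zero]
    have hTTexp : ∀ (j : Fin (n i)) (ω : Ω),
        (∑ i', ∑ l, N i i' j l * ε i' ω l) * (∑ i', ∑ l, N i i' j l * ε i' ω l)
        = ∑ i₁, ∑ i₂, ∑ l₁, ∑ l₂, (N i i₁ j l₁ * N i i₂ j l₂) * (ε i₁ ω l₁ * ε i₂ ω l₂) := by
      intro j ω
      rw [Finset.sum_mul_sum]
      refine Finset.sum_congr rfl fun i₁ _ => ?_
      refine Finset.sum_congr rfl fun i₂ _ => ?_
      rw [Finset.sum_mul_sum]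
      refine Finset.sum_congr rfl fun l₁ _ => ?_
      refine Finset.sum_congr rfl fun l₂ _ => ?_
      ring
    have hTTint : ∀ j : Fin (n i), Integrable (fun ω =>
        (∑ i', ∑ l, N i i' j l * ε i' ω l) * (∑ i', ∑ l, N i i' j l * ε i' ω l)) μ := by
      intro j
      refine (integrable_finset_sum _ fun i₁ _ => integrable_finset_sum _ fun i₂ _ =>
        integrable_finset_sum _ fun l₁ _ => integrable_finset_sum _ fun l₂ _ =>
        (hεint2 i₁ i₂ l₁ l₂).const_mul _).congr (ae_of_all _ fun ω => (hTTexp j ω).symm)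
    have hTTval : ∀ j : Fin (n i),
        ∫ ω, (∑ i', ∑ l, N i i' j l * ε i' ω l) * (∑ i', ∑ l, N i i' j l * ε i' ω l) ∂μ
        = σ ^ 2 * ∑ i', ∑ l, (N i i' j l) ^ 2 := by
      intro j
      rw [integral_congr_ae (ae_of_all _ (hTTexp j))]
      rw [integral_finset_sum _ fun i₁ _ => integrable_finset_sum _ fun i₂ _ =>
        integrable_finset_sum _ fun l₁ _ => integrable_finset_sum _ fun l₂ _ =>
        (hεint2 i₁ i₂ l₁ l₂).const_mul _]
      rw [Finset.mul_sum]
      refine Finset.sum_congr rfl fun i₁ _ => ?_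
      rw [integral_finset_sum _ fun i₂ _ => integrable_finset_sum _ fun l₁ _ =>
        integrable_finset_sum _ fun l₂ _ => (hεint2 i₁ i₂ l₁ l₂).const_mul _]
      have hzero : ∀ i₂ ∈ (Finset.univ : Finset (Fin K)), i₂ ≠ i₁ →
          (∫ ω, ∑ l₁, ∑ l₂, (N i i₁ j l₁ * N i i₂ j l₂) * (ε i₁ ω l₁ * ε i₂ ω l₂) ∂μ) = 0 := by
        intro i₂ _ hne
        rw [integral_finset_sum _ fun l₁ _ => integrable_finset_sum _ fun l₂ _ =>
          (hεint2 i₁ i₂ l₁ l₂).const_mul _]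
        refine Finset.sum_eq_zero fun l₁ _ => ?_
        rw [integral_finset_sum _ fun l₂ _ => (hεint2 i₁ i₂ l₁ l₂).const_mul _]
        refine Finset.sum_eq_zero fun l₂ _ => ?_
        rw [integral_const_mul, hcross i₁ i₂ l₁ l₂ (Ne.symm hne), mul_zero]
      rw [Finset.sum_eq_single_of_mem i₁ (Finset.mem_univ i₁) hzero]
      rw [integral_finset_sum _ fun l₁ _ => integrable_finset_sum _ fun l₂ _ =>
        (hεint2 i₁ i₁ l₁ l₂).const_mul _]
      rw [Finset.mul_sum]
      refine Finset.sum_congr rfl fun l₁ _ => ?_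
      rw [integral_finset_sum _ fun l₂ _ => (hεint2 i₁ i₁ l₁ l₂).const_mul _]
      have hterm : ∀ l₂ ∈ (Finset.univ : Finset (Fin (n i₁))),
          (∫ ω, (N i i₁ j l₁ * N i i₁ j l₂) * (ε i₁ ω l₁ * ε i₁ ω l₂) ∂μ)
          = if l₁ = l₂ then σ ^ 2 * N i i₁ j l₁ ^ 2 else 0 := by
        intro l₂ _
        rw [integral_const_mul, hεcov i₁ l₁ l₂]
        by_cases h : l₁ = l₂
        · subst h; rw [if_pos rfl, if_pos rfl]; ring
        · rw [if_neg h, if_neg h, mul_zero]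
      rw [Finset.sum_congr rfl hterm, Finset.sum_ite_eq]
      simp
    have hcore := fun j : Fin (n i) => core_expand (μ := μ) (fun ω => ε' i ω j)
        (fun ω => ∑ i', ∑ l, N i i' j l * ε i' ω l) (c i j)
        (hIntε' i j) (hTint j) (hε'int2 i i j j) (hTTint j) (hATint j)
        (hε'mean i j) (hTmean j) (hATmean j)
    have hsum : ∀ ω, (Y' i ω - X i *ᵥ θhat ω) ⬝ᵥ (Y' i ω - X i *ᵥ θhat ω)
        = ∑ j, (ε' i ω j - (c i j + ∑ i', ∑ l, N i i' j l * ε i' ω l))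
            * (ε' i ω j - (c i j + ∑ i', ∑ l, N i i' j l * ε i' ω l)) := by
      intro ω
      simp only [dotProduct]
      refine Finset.sum_congr rfl fun j _ => ?_
      rw [hres i ω j]
    rw [integral_congr_ae (ae_of_all _ hsum)]
    rw [integral_finset_sum _ fun j _ => (hcore j).1]
    have hjval : ∀ j ∈ (Finset.univ : Finset (Fin (n i))),
        (∫ ω, (ε' i ω j - (c i j + ∑ i', ∑ l, N i i' j l * ε i' ω l))
            * (ε' i ω j - (c i j + ∑ i', ∑ l, N i i' j l * ε i' ω l)) ∂μ)
        = σ ^ 2 + ((c i j) ^ 2 + σ ^ 2 * ∑ i', ∑ l, (N i i' j l) ^ 2) := by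
      intro j _
      rw [(hcore j).2, hTTval j]
      have := hε'cov i j j
      rw [if_pos rfl] at this
      rw [this]
    rw [Finset.sum_congr rfl hjval, Finset.sum_add_distrib, Finset.sum_add_distrib,
      ← Finset.mul_sum]
  -- step 5: the fresh-noise term
  have hε'group : ∀ i, ∫ ω, ε' i ω ⬝ᵥ ε' i ω ∂μ = ∑ _j : Fin (n i), σ ^ 2 := by
    intro i
    have hdp : ∀ ω, ε' i ω ⬝ᵥ ε' i ω = ∑ j, ε' i ω j * ε' i ω j := fun ω => rfl
    rw [integral_congr_ae (ae_of_all _ hdp),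
      integral_finset_sum _ fun j _ => hε'int2 i i j j]
    refine Finset.sum_congr rfl fun j _ => ?_
    have := hε'cov i j j
    rwa [if_pos rfl] at this
  -- step 6: the quadratic form identity
  have hquad : ∀ i, (∑ j, (c i j) ^ 2) = (θbar - θ i) ⬝ᵥ ψ i *ᵥ (θbar - θ i) := by
    intro i
    rw [hψ i, ← Matrix.mulVec_mulVec, Matrix.dotProduct_mulVec, Matrix.vecMul_transpose, hc]
    simp [dotProduct, pow_two]
  -- step 7: the trace identity
  have htraceN : ∀ i, (∑ j, ∑ i', ∑ l, (N i i' j l) ^ 2) = Matrix.trace (S⁻¹ * ψ i) := by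
    intro i
    have h1 : (∑ j, ∑ i', ∑ l, (N i i' j l) ^ 2) = ∑ i', ∑ j, ∑ l, (N i i' j l) ^ 2 :=
      Finset.sum_comm
    have h2 : ∀ i', (∑ j, ∑ l, (N i i' j l) ^ 2) = Matrix.trace (N i i' * (N i i')ᵀ) := by
      intro i'
      simp [Matrix.trace, Matrix.mul_apply, Matrix.diag, pow_two]
    have h3 : ∀ i', N i i' * (N i i')ᵀ = X i * (S⁻¹ * (ψ i' * (S⁻¹ * (X i)ᵀ))) := by
      intro i'
      rw [hN]
      simp only [Matrix.transpose_mul, Matrix.transpose_transpose, hSinvT, hψ, Matrix.mul_assoc]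
    rw [h1]
    calc ∑ i', ∑ j, ∑ l, (N i i' j l) ^ 2
        = ∑ i', Matrix.trace (X i * (S⁻¹ * (ψ i' * (S⁻¹ * (X i)ᵀ)))) := by
          refine Finset.sum_congr rfl fun i' _ => ?_
          rw [h2 i', h3 i']
      _ = Matrix.trace (∑ i', X i * (S⁻¹ * (ψ i' * (S⁻¹ * (X i)ᵀ)))) :=
          (Matrix.trace_sum _ _).symm
      _ = Matrix.trace (X i * (S⁻¹ * (S * (S⁻¹ * (X i)ᵀ)))) := by
          congr 1
          rw [← Matrix.mul_sum, ← Matrix.mul_sum, ← Matrix.sum_mul, ← hSdef]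
      _ = Matrix.trace (X i * (S⁻¹ * (X i)ᵀ)) := by
          rw [← Matrix.mul_assoc S⁻¹ S, hSinv, Matrix.one_mul]
      _ = Matrix.trace (S⁻¹ * ψ i) := by
          rw [Matrix.trace_mul_comm, Matrix.mul_assoc, ← hψ i]
  have htrsum : (∑ i, Matrix.trace (S⁻¹ * ψ i)) = (d:ℝ) := by
    rw [← Matrix.trace_sum, ← Finset.mul_sum, ← hSdef, hSinv, Matrix.trace_one]
    simp
  -- step 8: final assembly
  rw [Finset.sum_congr rfl fun i _ => hgroup i, Finset.sum_congr rfl fun i _ => hε'group i,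
    Finset.sum_add_distrib, add_sub_cancel_left, Finset.sum_add_distrib]
  congr 1
  · exact Finset.sum_congr rfl fun i _ => hquad i
  · rw [Finset.sum_congr rfl fun (i : Fin K) (_ : i ∈ Finset.univ) =>
      congrArg (fun z => σ ^ 2 * z) (htraceN i), ← Finset.mul_sum, htrsum]
end

section
/- If a model's residual has nonzero conditional mean under some context occurring with positive probability, then the Reconditionor mutual information is strictly positive: if E[ΔY] = 0 but E[ΔY | C = c] ≠ 0 for some c with P(C = c) > 0, then MI(ΔY; C) > 0. -/
open MeasureTheory ProbabilityTheory
open scoped BigOperators ProbabilityTheory ENNReal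

lemma rnDeriv_le_const_of_le {α : Type*} [MeasurableSpace α] {ν m : Measure α}
    [SigmaFinite m] (M : ℝ≥0∞) (hle : ν ≤ M • m) :
    ν.rnDeriv m ≤ᵐ[m] fun _ => M := by
  refine ae_le_of_forall_setLIntegral_le_of_sigmaFinite (ν.measurable_rnDeriv m)
    fun s _ _ ↦ ?_
  calc ∫⁻ x in s, ν.rnDeriv m x ∂m ≤ ν s := Measure.setLIntegral_rnDeriv_le s
    _ ≤ (M • m) s := hle s
    _ = ∫⁻ _ in s, M ∂m := by simp [Measure.smul_apply, mul_comm]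

/-- Gibbs' inequality with strictness, for a conditional law dominated by a
constant multiple of the marginal. -/
lemma gibbs_aux {ν m : Measure ℝ} [IsProbabilityMeasure ν] [IsProbabilityMeasure m]
    (hνm : ν ≪ m) (M : ℝ≥0∞) (hM : M ≠ ∞) (hle : ν ≤ M • m) :
    0 ≤ ∫ x, Real.log ((ν.rnDeriv m x).toReal) ∂ν ∧
      (ν ≠ m → 0 < ∫ x, Real.log ((ν.rnDeriv m x).toReal) ∂ν) := by
  set f : ℝ → ℝ := fun x => (ν.rnDeriv m x).toReal with hf
  have hfm : Measurable f := (ν.measurable_rnDeriv m).ennreal_toReal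
  have hchange : ∫ x, Real.log (f x) ∂ν = ∫ x, f x * Real.log (f x) ∂m := by
    rw [← integral_rnDeriv_smul hνm (f := fun x => Real.log (f x))]
    simp [smul_eq_mul]
    rfl
  have hboundE : ν.rnDeriv m ≤ᵐ[m] fun _ => M := rnDeriv_le_const_of_le M hle
  have hbound : ∀ᵐ x ∂m, f x ≤ M.toReal := by
    filter_upwards [hboundE] with x hx
    exact ENNReal.toReal_mono hM hx
  have hmem : ∀ᵐ x ∂m, f x ∈ Set.Ici (0 : ℝ) :=
    Filter.Eventually.of_forall fun x => ENNReal.toReal_nonneg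
  have hf_int : Integrable f m := Measure.integrable_toReal_rnDeriv
  have hf_avg : ∫ x, f x ∂m = 1 := by
    rw [hf, Measure.integral_toReal_rnDeriv hνm]
    simp
  -- integrability of f * log f
  obtain ⟨B, hB⟩ := (isCompact_Icc (a := (0:ℝ)) (b := M.toReal)).exists_bound_of_continuousOn
    (Real.continuous_mul_log.continuousOn)
  have hgf_int : Integrable (fun x => f x * Real.log (f x)) m := by
    refine Integrable.mono' (integrable_const B)
      (hfm.mul (Real.measurable_log.comp hfm)).aestronglyMeasurable ?_
    filter_upwards [hbound] with x hx
    have hx0 : (0:ℝ) ≤ f x := ENNReal.toReal_nonneg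
    have := hB (f x) ⟨hx0, hx⟩
    calc ‖f x * Real.log (f x)‖ ≤ ‖f x * Real.log (f x)‖ := le_rfl
      _ ≤ B := this
  have hjensen := Real.strictConvexOn_mul_log.ae_eq_const_or_map_average_lt
    Real.continuous_mul_log.continuousOn isClosed_Ici hmem hf_int hgf_int
  rw [average_eq_integral, average_eq_integral, hf_avg] at hjensen
  rcases hjensen with heq | hlt
  · -- f =ᵐ 1 so ν = m and the integral is 0
    have heq1 : f =ᵐ[m] fun _ => 1 := heq
    have hrn1 : ν.rnDeriv m =ᵐ[m] 1 := by
      filter_upwards [heq1, ν.rnDeriv_lt_top m] with x hx hxlt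
      have : (ν.rnDeriv m x).toReal = 1 := hx
      exact (ENNReal.toReal_eq_one_iff _).mp this
    have hνeq : ν = m := (Measure.rnDeriv_eq_one_iff_eq hνm).mp hrn1
    have hzero : ∫ x, f x * Real.log (f x) ∂m = 0 := by
      rw [integral_congr_ae (g := fun _ => (0:ℝ))]
      · simp
      · filter_upwards [heq1] with x hx
        simp [hx]
    constructor
    · rw [hchange, hzero]
    · intro h; exact absurd hνeq h
  · have hpos : 0 < ∫ x, f x * Real.log (f x) ∂m := by
      simpa using hlt
    rw [hchange]
    exact ⟨hpos.le, fun _ => hpos⟩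

/-- If the residual has zero mean but nonzero conditional mean under some
context occurring with positive probability, the mutual information
(Reconditionor score) is strictly positive. -/
theorem reconditionor_positive_of_biased_context
    {Ω : Type*} [MeasurableSpace Ω] (μ : Measure Ω) [IsProbabilityMeasure μ]
    {K : ℕ}
    (C : Ω → Fin K) (ΔY : Ω → ℝ)
    (hC : Measurable C) (hΔY : Measurable ΔY)
    (hΔYint : Integrable ΔY μ)
    (condLaw : Fin K → Measure ℝ)
    (hcond : ∀ c, condLaw c = (μ[|C ⁻¹' {c}]).map ΔY)
    (marginal : Measure ℝ)
    (hmarg : marginal = μ.map ΔY)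
    (hac : ∀ c, μ (C ⁻¹' {c}) ≠ 0 → condLaw c ≪ marginal)
    (MI : ℝ)
    (hMI : MI = ∑ c, (μ (C ⁻¹' {c})).toReal *
        ∫ x, Real.log (((condLaw c).rnDeriv marginal x).toReal) ∂(condLaw c))
    (hmean : ∫ ω, ΔY ω ∂μ = 0)
    (c₀ : Fin K) (hc₀ : μ (C ⁻¹' {c₀}) ≠ 0)
    (hbias : ∫ ω, ΔY ω ∂(μ[|C ⁻¹' {c₀}]) ≠ 0) :
    0 < MI := by
  have hmargP : IsProbabilityMeasure marginal := by
    rw [hmarg]; exact Measure.isProbabilityMeasure_map hΔY.aemeasurable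
  -- key facts for each context with positive probability
  have key : ∀ c, μ (C ⁻¹' {c}) ≠ 0 →
      0 ≤ ∫ x, Real.log (((condLaw c).rnDeriv marginal x).toReal) ∂(condLaw c) ∧
      (condLaw c ≠ marginal →
        0 < ∫ x, Real.log (((condLaw c).rnDeriv marginal x).toReal) ∂(condLaw c)) := by
    intro c hc
    have hcondP : IsProbabilityMeasure (μ[|C ⁻¹' {c}]) :=
      cond_isProbabilityMeasure hc
    have hlawP : IsProbabilityMeasure (condLaw c) := by
      rw [hcond c]; exact Measure.isProbabilityMeasure_map hΔY.aemeasurable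
    have hM : (μ (C ⁻¹' {c}))⁻¹ ≠ ∞ := ENNReal.inv_ne_top.mpr hc
    have hle : condLaw c ≤ (μ (C ⁻¹' {c}))⁻¹ • marginal := by
      rw [hcond c, hmarg]
      have heq : (μ[|C ⁻¹' {c}]).map ΔY
          = (μ (C ⁻¹' {c}))⁻¹ • (μ.restrict (C ⁻¹' {c})).map ΔY := by
        rw [ProbabilityTheory.cond, Measure.map_smul]
      rw [heq]
      intro t
      simp only [Measure.smul_apply, smul_eq_mul]
      exact mul_le_mul_right ((Measure.map_mono Measure.restrict_le_self hΔY) t) _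
    exact gibbs_aux (hac c hc) _ hM hle
  -- each summand is nonnegative
  have hterm_nonneg : ∀ c : Fin K, 0 ≤ (μ (C ⁻¹' {c})).toReal *
      ∫ x, Real.log (((condLaw c).rnDeriv marginal x).toReal) ∂(condLaw c) := by
    intro c
    by_cases hc : μ (C ⁻¹' {c}) = 0
    · simp [hc]
    · exact mul_nonneg ENNReal.toReal_nonneg (key c hc).1
  -- the c₀ summand is positive
  have hne : condLaw c₀ ≠ marginal := by
    intro h
    have hmean1 : ∫ x, x ∂(condLaw c₀) = ∫ ω, ΔY ω ∂(μ[|C ⁻¹' {c₀}]) := by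
      rw [hcond c₀]
      exact integral_map hΔY.aemeasurable aestronglyMeasurable_id
    have hmean2 : ∫ x, x ∂marginal = ∫ ω, ΔY ω ∂μ := by
      rw [hmarg]
      exact integral_map hΔY.aemeasurable aestronglyMeasurable_id
    apply hbias
    rw [← hmean1, h, hmean2, hmean]
  have hpos : 0 < (μ (C ⁻¹' {c₀})).toReal *
      ∫ x, Real.log (((condLaw c₀).rnDeriv marginal x).toReal) ∂(condLaw c₀) :=
    mul_pos (ENNReal.toReal_pos hc₀ (measure_ne_top μ _)) ((key c₀ hc₀).2 hne)
  rw [hMI]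
  exact Finset.sum_pos' (fun c _ => hterm_nonneg c) ⟨c₀, Finset.mem_univ c₀, hpos⟩
end
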